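/- arXiv:1601.04120 — 3 statements merged into one kernel-verified Lean document; each statement's English description precedes it below -/
import Mathlib

section
/- Let Δx > 0 and let u : ℝ → ℝ be a polynomial function of degree at most 3. For y ∈ ℝ define the P¹ projection coefficients on the cell [y − Δx/2, y + Δx/2]: a₀(y) = (1/Δx)∫_{y−Δx/2}^{y+Δx/2} u(x) dx and a₁(y) = (12/Δx)∫_{y−Δx/2}^{y+Δx/2} u(x)·(x−y)/Δx dx, and set g(y) = a₀(y) + a₁(y)/2 (the upwind interface value at y + Δx/2). Then for every y ∈ ℝ: (g(y) − g(y − Δx))/Δx = u'(y) − u'''(y)·Δx²/24. -/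
/-! Shifting to the cell centre, `u (y + t)` is a cubic `A + B t + C t² + D t³` in `t`. Over the
cell `[-Δx/2, Δx/2]` the odd moments vanish, `∫ t² = Δx³/12` and `∫ t⁴ = Δx⁵/80`, so the upwind value
is `g y = A + B Δx/2 + C Δx²/12 + 3 D Δx³/40`, i.e. `u + u' Δx/2 + u'' Δx²/24 + u''' Δx³/80` at `y`.
Expanding the same expression at `y - Δx` around `y`, the `u''` terms cancel and the `u'''` terms
leave `-Δx³/24`. -/

open Polynomial

namespace Polynomial

theorem eval_eq_cubic {R : Type*} [Semiring R] {p : R[X]} (hp : p.natDegree ≤ 3) (x : R) :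
    p.eval x = p.coeff 0 + p.coeff 1 * x + p.coeff 2 * x ^ 2 + p.coeff 3 * x ^ 3 := by
  simp [p.eval_eq_sum_range' (n := 4) (by omega), Finset.sum_range_succ]

theorem derivative_eval_eq_cubic {R : Type*} [CommSemiring R] {p : R[X]} (hp : p.natDegree ≤ 3)
    (x : R) :
    p.derivative.eval x = p.coeff 1 + 2 * p.coeff 2 * x + 3 * p.coeff 3 * x ^ 2 := by
  have hp' : p.derivative.natDegree ≤ 3 := (natDegree_derivative_le p).trans (by omega)
  have hcoeff_four : p.coeff 4 = 0 := coeff_eq_zero_of_natDegree_lt (by omega)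
  rw [eval_eq_cubic hp']
  simp only [coeff_derivative, hcoeff_four]
  push_cast
  ring

theorem iterate_derivative_three_eval_eq_cubic {R : Type*} [CommSemiring R] {p : R[X]}
    (hp : p.natDegree ≤ 3) (x : R) :
    (derivative^[3] p).eval x = 6 * p.coeff 3 := by
  have hconst : (derivative^[3] p).natDegree = 0 :=
    Nat.eq_zero_of_le_zero ((natDegree_iterate_derivative p 3).trans (by omega))
  rw [eq_C_of_natDegree_eq_zero hconst, eval_C, coeff_iterate_derivative]
  simp [Nat.descFactorial]

theorem iteratedDeriv_eval {𝕜 : Type*} [NontriviallyNormedField 𝕜] (p : 𝕜[X]) (n : ℕ) :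
    iteratedDeriv n (fun x => p.eval x) = fun x => (derivative^[n] p).eval x := by
  induction n generalizing p with
  | zero => rfl
  | succ n ih =>
    have hderiv : deriv (fun x => p.eval x) = fun x => p.derivative.eval x := by
      ext x; exact p.deriv
    rw [iteratedDeriv_succ', Function.iterate_succ_apply, ← ih, hderiv]

end Polynomial

theorem integral_neg_to_self_quartic (a b c d e r : ℝ) :
    ∫ t in -r..r, (a + b * t + c * t ^ 2 + d * t ^ 3 + e * t ^ 4)
      = 2 * a * r + 2 * c * r ^ 3 / 3 + 2 * e * r ^ 5 / 5 := by
  simp (disch := apply Continuous.intervalIntegrable; fun_prop) only [intervalIntegral.integral_add,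
    intervalIntegral.integral_const, intervalIntegral.integral_const_mul, integral_pow, smul_eq_mul]
  rw [intervalIntegral.integral_const_mul, integral_id]
  ring

theorem integral_cell_eq_integral_comp_add (f : ℝ → ℝ) (y h : ℝ) :
    ∫ x in (y - h / 2)..(y + h / 2), f x = ∫ t in -(h / 2)..(h / 2), f (t + y) := by
  rw [intervalIntegral.integral_comp_add_right, neg_add_eq_sub, add_comm]

section CubicCell

variable {f : ℝ → ℝ} {y A B C D : ℝ}

theorem integral_cell_of_cubic (hf : ∀ t, f (t + y) = A + B * t + C * t ^ 2 + D * t ^ 3)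
    (h : ℝ) :
    ∫ x in (y - h / 2)..(y + h / 2), f x = A * h + C * h ^ 3 / 12 := by
  have hquartic : ∀ t, f (t + y) = A + B * t + C * t ^ 2 + D * t ^ 3 + 0 * t ^ 4 := by
    simp [hf]
  simp_rw [integral_cell_eq_integral_comp_add, hquartic, integral_neg_to_self_quartic]
  ring

theorem integral_cell_mul_sub_of_cubic
    (hf : ∀ t, f (t + y) = A + B * t + C * t ^ 2 + D * t ^ 3) (h : ℝ) :
    ∫ x in (y - h / 2)..(y + h / 2), f x * (x - y) = B * h ^ 3 / 12 + D * h ^ 5 / 80 := by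
  have hquartic :
      ∀ t, f (t + y) * (t + y - y) = 0 + A * t + B * t ^ 2 + C * t ^ 3 + D * t ^ 4 := by
    intro t; rw [hf]; ring
  simp_rw [integral_cell_eq_integral_comp_add, hquartic, integral_neg_to_self_quartic]
  ring

theorem cell_upwind_value_of_cubic (hf : ∀ t, f (t + y) = A + B * t + C * t ^ 2 + D * t ^ 3)
    {h : ℝ} (hh : h ≠ 0) :
    (1 / h) * (∫ x in (y - h / 2)..(y + h / 2), f x)
        + (12 / h) * (∫ x in (y - h / 2)..(y + h / 2), f x * ((x - y) / h)) / 2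
      = A + B * h / 2 + C * h ^ 2 / 12 + 3 * D * h ^ 3 / 40 := by
  simp_rw [mul_div_assoc', intervalIntegral.integral_div, integral_cell_of_cubic hf,
    integral_cell_mul_sub_of_cubic hf]
  field_simp
  ring

end CubicCell

/-- Truncation identity for the upwind flux difference of the second-order DG scheme:
`(g(y) − g(y−Δx))/Δx = u'(y) − u'''(y)·Δx²/24` for cubic `u`. -/
theorem dg_p1_upwind_flux_difference (Δx : ℝ) (hΔx : 0 < Δx)
    (u : ℝ → ℝ) (p : Polynomial ℝ) (hp : p.natDegree ≤ 3)
    (hu : ∀ x, u x = p.eval x)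
    (a₀ a₁ g : ℝ → ℝ)
    (ha₀ : ∀ y, a₀ y = (1 / Δx) * ∫ x in (y - Δx / 2)..(y + Δx / 2), u x)
    (ha₁ : ∀ y, a₁ y =
      (12 / Δx) * ∫ x in (y - Δx / 2)..(y + Δx / 2), u x * ((x - y) / Δx))
    (hg : ∀ y, g y = a₀ y + a₁ y / 2) :
    ∀ y : ℝ, (g y - g (y - Δx)) / Δx
      = deriv u y - iteratedDeriv 3 u y * Δx ^ 2 / 24 := by
  intro y
  set c := p.coeff
  have htaylor : ∀ z t, u (t + z) = (c 0 + c 1 * z + c 2 * z ^ 2 + c 3 * z ^ 3)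
      + (c 1 + 2 * c 2 * z + 3 * c 3 * z ^ 2) * t + (c 2 + 3 * c 3 * z) * t ^ 2 + c 3 * t ^ 3 := by
    intro z t
    rw [hu, eval_eq_cubic hp]
    ring
  have hupwind : ∀ z, g z = (c 0 + c 1 * z + c 2 * z ^ 2 + c 3 * z ^ 3)
      + (c 1 + 2 * c 2 * z + 3 * c 3 * z ^ 2) * Δx / 2 + (c 2 + 3 * c 3 * z) * Δx ^ 2 / 12
      + 3 * c 3 * Δx ^ 3 / 40 := fun z => by
    rw [hg, ha₀, ha₁]
    exact cell_upwind_value_of_cubic (htaylor z) hΔx.ne'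
  have hu' : u = fun x => p.eval x := funext hu
  have hderiv : deriv u y = c 1 + 2 * c 2 * y + 3 * c 3 * y ^ 2 := by
    rw [hu', Polynomial.deriv, derivative_eval_eq_cubic hp]
  have hthird : iteratedDeriv 3 u y = 6 * c 3 := by
    rw [hu', iteratedDeriv_eval]
    exact iterate_derivative_three_eval_eq_cubic hp y
  rw [hupwind, hupwind, hderiv, hthird]
  field_simp
  ring
end

section
/- Let Δx > 0 and let u : ℝ → ℝ be a polynomial function of degree at most 3. For y ∈ ℝ define a₀(y) = (1/Δx)∫_{y−Δx/2}^{y+Δx/2} u(x) dx. Then for every y ∈ ℝ: (6/Δx)·(u(y + Δx/2) − 2a₀(y) + u(y − Δx/2)) = u''(y)·Δx. -/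
/-!
For a cubic, Simpson's rule is exact, so the cell average is
`a₀(y) = (u(y - Δx/2) + 4 u(y) + u(y + Δx/2)) / 6`, and the operator becomes
`(4/Δx) (u(y + Δx/2) - 2 u(y) + u(y - Δx/2))`. The central second difference of a cubic is
exact as well, being `u''(y) (Δx/2)²`, since the odd Taylor terms cancel and there is no quartic one.
-/

open Polynomial

namespace Polynomial

theorem eq_cubic_of_natDegree_le_three {R : Type*} [Semiring R] {p : R[X]}
    (hp : p.natDegree ≤ 3) :
    p = C (p.coeff 0) + C (p.coeff 1) * X + C (p.coeff 2) * X ^ 2 + C (p.coeff 3) * X ^ 3 := by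
  conv_lhs => rw [p.as_sum_range' 4 (by omega)]
  simp [Finset.sum_range_succ, ← C_mul_X_pow_eq_monomial]

theorem eval_add_sub_two_mul_eval_add_eval_sub {R : Type*} [CommRing R] {p : R[X]}
    (hp : p.natDegree ≤ 3) (y h : R) :
    p.eval (y + h) - 2 * p.eval y + p.eval (y - h) = (derivative^[2] p).eval y * h ^ 2 := by
  rw [eq_cubic_of_natDegree_le_three hp]
  simp only [Function.iterate_succ_apply, Function.iterate_zero_apply, derivative_add,
    derivative_C_mul_X, derivative_C_mul_X_pow, derivative_C, derivative_zero, eval_add, eval_mul,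
    eval_C, eval_X, eval_pow, eval_zero]
  ring

theorem integral_eval_eq_simpson {p : ℝ[X]} (hp : p.natDegree ≤ 3) (a b : ℝ) :
    ∫ x in a..b, p.eval x = (b - a) / 6 * (p.eval a + 4 * p.eval ((a + b) / 2) + p.eval b) := by
  rw [eq_cubic_of_natDegree_le_three hp]
  simp only [eval_add, eval_mul, eval_C, eval_X, eval_pow]
  rw [intervalIntegral.integral_add, intervalIntegral.integral_add, intervalIntegral.integral_add]
  · simp only [intervalIntegral.integral_const_mul, intervalIntegral.integral_const, integral_pow,
      smul_eq_mul]
    rw [intervalIntegral.integral_const_mul, integral_id]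
    ring
  all_goals exact (by fun_prop : Continuous _).intervalIntegrable _ _

end Polynomial

/-- The spatial operator in the slope equation of the second-order DG scheme with
exact interface values equals `u''(y)·Δx` for cubic `u`. -/
theorem dg_p1_slope_operator_exact_flux (Δx : ℝ) (hΔx : 0 < Δx)
    (u : ℝ → ℝ) (p : Polynomial ℝ) (hp : p.natDegree ≤ 3)
    (hu : ∀ x, u x = p.eval x)
    (a₀ : ℝ → ℝ)
    (ha₀ : ∀ y, a₀ y = (1 / Δx) * ∫ x in (y - Δx / 2)..(y + Δx / 2), u x) :
    ∀ y : ℝ, (6 / Δx) * (u (y + Δx / 2) - 2 * a₀ y + u (y - Δx / 2))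
      = iteratedDeriv 2 u y * Δx := by
  intro y
  obtain rfl : u = fun x => p.eval x := funext hu
  have hwidth : y + Δx / 2 - (y - Δx / 2) = Δx := by ring
  have hmid : (y - Δx / 2 + (y + Δx / 2)) / 2 = y := by ring
  have hdiff := eval_add_sub_two_mul_eval_add_eval_sub hp y (Δx / 2)
  rw [ha₀, integral_eval_eq_simpson hp, hwidth, hmid, iteratedDeriv_eval]
  beta_reduce
  -- otherwise `field_simp` also rewrites the evaluation points `y ± Δx / 2`
  generalize p.eval (y + Δx / 2) = uR, p.eval (y - Δx / 2) = uL at hdiff ⊢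
  field_simp
  linear_combination 4 * hdiff
end

section
/- Let Δx > 0 and let u : ℝ → ℝ be a polynomial function of degree at most 3. For y ∈ ℝ define the P¹ projection coefficients a₀(y) = (1/Δx)∫_{y−Δx/2}^{y+Δx/2} u(x) dx and a₁(y) = (12/Δx)∫_{y−Δx/2}^{y+Δx/2} u(x)·(x−y)/Δx dx, and set g(y) = a₀(y) + a₁(y)/2. Then for every y ∈ ℝ: (6/Δx)·(g(y) + g(y − Δx) − 2a₀(y)) = (2/5)·u'''(y)·Δx². In particular, the term proportional to u''(y)·Δx is absent, so this upwind spatial operator for the slope coefficient does not approximate u''(y)·Δx. -/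
/-!
Shifting to the cell centre, the odd moments of `s ↦ sᵏ` over `[-Δx/2, Δx/2]` vanish, so for a
cubic `u` one gets `a₀(y) = u(y) + u''(y)Δx²/24` and `a₁(y) = u'(y)Δx + u'''(y)Δx³/40` exactly.
Expanding `g(y - Δx)` around `y`, the `u`, `u'` and `u''` terms cancel in
`g(y) + g(y - Δx) - 2a₀(y)`, leaving `u'''(y)Δx³/15`.
-/

open Polynomial

theorem Polynomial.iteratedDeriv_eval_s11 {𝕜 : Type*} [NontriviallyNormedField 𝕜] (p : 𝕜[X])
    (n : ℕ) : iteratedDeriv n (fun x => p.eval x) = fun x => (derivative^[n] p).eval x := by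
  induction n generalizing p with
  | zero => rfl
  | succ n ih =>
    have hderiv : deriv (fun x => p.eval x) = fun x => p.derivative.eval x := by
      ext x; exact p.deriv
    rw [iteratedDeriv_succ', hderiv, ih, Function.iterate_succ_apply]

theorem Polynomial.eval_iterate_derivative_of_natDegree_le {R : Type*} [CommRing R] {p : R[X]}
    {n : ℕ} (hp : p.natDegree ≤ n) (x : R) :
    (derivative^[n] p).eval x = n.factorial * p.coeff n := by
  have hdeg : (derivative^[n] p).natDegree = 0 := by
    have := natDegree_iterate_derivative p n; omega
  rw [eq_C_of_natDegree_eq_zero hdeg, eval_C, coeff_iterate_derivative, zero_add,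
    Nat.descFactorial_self, nsmul_eq_mul]

theorem Polynomial.eval_eq_of_natDegree_le_three {R : Type*} [CommSemiring R] {p : R[X]}
    (hp : p.natDegree ≤ 3) (x : R) :
    p.eval x = p.coeff 0 + p.coeff 1 * x + p.coeff 2 * x ^ 2 + p.coeff 3 * x ^ 3 := by
  rw [eval_eq_sum_range' (Nat.lt_succ_of_le hp)]
  simp only [Finset.sum_range_succ, Finset.sum_range_zero, pow_zero, pow_one, mul_one, zero_add]

theorem integral_quartic_symm (e₀ e₁ e₂ e₃ e₄ r : ℝ) :
    ∫ s in -r..r, (e₀ + e₁ * s + e₂ * s ^ 2 + e₃ * s ^ 3 + e₄ * s ^ 4)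
      = 2 * r * e₀ + 2 * r ^ 3 * e₂ / 3 + 2 * r ^ 5 * e₄ / 5 := by
  have hF : ∀ s ∈ Set.uIcc (-r) r, HasDerivAt
      (fun s => e₀ * s + e₁ * s ^ 2 / 2 + e₂ * s ^ 3 / 3 + e₃ * s ^ 4 / 4 + e₄ * s ^ 5 / 5)
      (e₀ + e₁ * s + e₂ * s ^ 2 + e₃ * s ^ 3 + e₄ * s ^ 4) s := by
    intro s _
    have h : HasDerivAt
        (fun s => e₀ * s + e₁ * s ^ 2 / 2 + e₂ * s ^ 3 / 3 + e₃ * s ^ 4 / 4 + e₄ * s ^ 5 / 5)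
        (e₀ * 1 + e₁ * (↑2 * s ^ 1) / 2 + e₂ * (↑3 * s ^ 2) / 3 + e₃ * (↑4 * s ^ 3) / 4
          + e₄ * (↑5 * s ^ 4) / 5) s :=
      (((((hasDerivAt_id s).const_mul e₀).add
        (((hasDerivAt_pow 2 s).const_mul e₁).div_const 2)).add
        (((hasDerivAt_pow 3 s).const_mul e₂).div_const 3)).add
        (((hasDerivAt_pow 4 s).const_mul e₃).div_const 4)).add
        (((hasDerivAt_pow 5 s).const_mul e₄).div_const 5)
    convert h using 1
    ring
  rw [intervalIntegral.integral_eq_sub_of_hasDerivAt hF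
    (Continuous.intervalIntegrable (by fun_prop) _ _)]
  ring

theorem integral_centered_eq_integral_symm (f : ℝ → ℝ) (y r : ℝ) :
    ∫ x in (y - r)..(y + r), f x = ∫ s in -r..r, f (y + s) := by
  rw [intervalIntegral.integral_comp_add_left, sub_eq_add_neg]

theorem integral_cubic_centered (c₀ c₁ c₂ c₃ y r : ℝ) :
    ∫ x in (y - r)..(y + r), (c₀ + c₁ * x + c₂ * x ^ 2 + c₃ * x ^ 3)
      = 2 * r * (c₀ + c₁ * y + c₂ * y ^ 2 + c₃ * y ^ 3) + 2 * r ^ 3 / 3 * (c₂ + 3 * c₃ * y) := by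
  have hshift : (fun s => c₀ + c₁ * (y + s) + c₂ * (y + s) ^ 2 + c₃ * (y + s) ^ 3)
      = fun s => (c₀ + c₁ * y + c₂ * y ^ 2 + c₃ * y ^ 3) + (c₁ + 2 * c₂ * y + 3 * c₃ * y ^ 2) * s
        + (c₂ + 3 * c₃ * y) * s ^ 2 + c₃ * s ^ 3 + 0 * s ^ 4 := by
    ext s; ring
  rw [integral_centered_eq_integral_symm, hshift, integral_quartic_symm]
  ring

theorem integral_cubic_mul_sub_centered (c₀ c₁ c₂ c₃ y r : ℝ) :
    ∫ x in (y - r)..(y + r), (c₀ + c₁ * x + c₂ * x ^ 2 + c₃ * x ^ 3) * (x - y)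
      = 2 * r ^ 3 / 3 * (c₁ + 2 * c₂ * y + 3 * c₃ * y ^ 2) + 2 * r ^ 5 / 5 * c₃ := by
  have hshift :
      (fun s => (c₀ + c₁ * (y + s) + c₂ * (y + s) ^ 2 + c₃ * (y + s) ^ 3) * (y + s - y))
      = fun s => 0 + (c₀ + c₁ * y + c₂ * y ^ 2 + c₃ * y ^ 3) * s
        + (c₁ + 2 * c₂ * y + 3 * c₃ * y ^ 2) * s ^ 2 + (c₂ + 3 * c₃ * y) * s ^ 3
        + c₃ * s ^ 4 := by
    ext s; ring
  rw [integral_centered_eq_integral_symm, hshift, integral_quartic_symm]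
  ring

/-- The upwind spatial operator in the slope equation of the second-order DG scheme
equals `(2/5)·u'''(y)·Δx²` for cubic `u`; in particular the `u''(y)·Δx` term is
absent, so the slope update degenerates to first order. -/
theorem dg_p1_slope_operator_upwind_flux (Δx : ℝ) (hΔx : 0 < Δx)
    (u : ℝ → ℝ) (p : Polynomial ℝ) (hp : p.natDegree ≤ 3)
    (hu : ∀ x, u x = p.eval x)
    (a₀ a₁ g : ℝ → ℝ)
    (ha₀ : ∀ y, a₀ y = (1 / Δx) * ∫ x in (y - Δx / 2)..(y + Δx / 2), u x)
    (ha₁ : ∀ y, a₁ y =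
      (12 / Δx) * ∫ x in (y - Δx / 2)..(y + Δx / 2), u x * ((x - y) / Δx))
    (hg : ∀ y, g y = a₀ y + a₁ y / 2) :
    ∀ y : ℝ, (6 / Δx) * (g y + g (y - Δx) - 2 * a₀ y)
      = (2 / 5) * iteratedDeriv 3 u y * Δx ^ 2 := by
  intro y
  have hu_eval : u = fun x => p.eval x := funext hu
  have hu_cubic :
      u = fun x => p.coeff 0 + p.coeff 1 * x + p.coeff 2 * x ^ 2 + p.coeff 3 * x ^ 3 :=
    hu_eval.trans (funext (eval_eq_of_natDegree_le_three hp))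
  have hu''' : iteratedDeriv 3 u y = 6 * p.coeff 3 := by
    simp only [hu_eval, iteratedDeriv_eval_s11, eval_iterate_derivative_of_natDegree_le hp]
    norm_num [Nat.factorial]
  rw [hu''']
  simp only [hg, ha₀, ha₁, mul_div_assoc', intervalIntegral.integral_div, hu_cubic,
    integral_cubic_centered, integral_cubic_mul_sub_centered]
  field_simp
  ring
end
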